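/- arXiv:2507.02422 — 4 statements merged into one kernel-verified Lean document; each statement's English description precedes it below -/
import Mathlib

section
/- Let Φ be a positive unital linear map from the n×n complex matrices to the m×m complex matrices, let x be a positive semidefinite n×n complex matrix, and let f : ℝ → ℝ be a continuous function that is convex on [0, ∞). Then Φ(x) is positive semidefinite and Tr f(Φ(x)) ≤ Tr Φ(f(x)). -/
/-!
Write `x = ∑ᵢ λᵢ Pᵢ` with rank-one spectral projections `Pᵢ`, and let `(wⱼ)` be an orthonormal
eigenbasis of `Φ(x)`, with eigenvalues `μⱼ`. The numbers `cⱼᵢ = ⟪wⱼ, Φ(Pᵢ) wⱼ⟫` are nonnegative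
because `Φ` is positive, `∑ᵢ cⱼᵢ = 1` because `Φ` is unital, and `μⱼ = ∑ᵢ cⱼᵢ λᵢ`. Scalar Jensen
gives `f(μⱼ) ≤ ∑ᵢ cⱼᵢ f(λᵢ) = ⟪wⱼ, Φ(f(x)) wⱼ⟫`, and summing over `j` gives the trace inequality.
-/

open scoped ComplexOrder

/-- `g` applied to a Hermitian matrix via the functional calculus
(`g(A) = ∑ᵢ g(λᵢ) Pᵢ` for the spectral decomposition `A = ∑ᵢ λᵢ Pᵢ`). -/
noncomputable def matFun {k : ℕ} {A : Matrix (Fin k) (Fin k) ℂ} (hA : A.IsHermitian)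
    (g : ℝ → ℝ) : Matrix (Fin k) (Fin k) ℂ := hA.cfc g

section

open Matrix Unitary

variable {𝕜 n m : Type*} [RCLike 𝕜] [Fintype n] [DecidableEq n] [Fintype m] [DecidableEq m]

namespace Matrix.IsHermitian

variable {A : Matrix n n 𝕜} (hA : A.IsHermitian)

noncomputable def eigenProj (i : n) : Matrix n n 𝕜 :=
  conjStarAlgAut 𝕜 _ hA.eigenvectorUnitary (single i i 1)

lemma eigenProj_posSemidef (i : n) : (hA.eigenProj i).PosSemidef := by
  rw [eigenProj, conjStarAlgAut_apply, ← diagonal_single, star_eq_conjTranspose]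
  exact (PosSemidef.diagonal (Pi.single_nonneg.mpr zero_le_one)).mul_mul_conjTranspose_same _

lemma sum_eigenProj : ∑ i, hA.eigenProj i = 1 := by
  simp only [eigenProj, ← map_sum, sum_single_one, map_one]

lemma cfc_eq_sum_smul_eigenProj (g : ℝ → ℝ) :
    hA.cfc g = ∑ i, (g (hA.eigenvalues i) : 𝕜) • hA.eigenProj i := by
  simp only [IsHermitian.cfc, eigenProj, ← map_smul, ← map_sum, smul_single, smul_eq_mul, mul_one,
    sum_single_eq_diagonal]
  rfl

lemma eq_sum_smul_eigenProj : A = ∑ i, (hA.eigenvalues i : 𝕜) • hA.eigenProj i :=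
  hA.spectral_theorem.trans (hA.cfc_eq_sum_smul_eigenProj id)

lemma trace_cfc (g : ℝ → ℝ) : (hA.cfc g).trace = ∑ i, (g (hA.eigenvalues i) : 𝕜) := by
  rw [IsHermitian.cfc, conjStarAlgAut_apply, trace_mul_cycle, coe_star_mul_self, one_mul,
    trace_diagonal]
  rfl

end Matrix.IsHermitian

lemma ConvexOn.map_re_apply_le_apply_cfc {ω : Matrix n n 𝕜 →ₗ[𝕜] 𝕜}
    (hω : ∀ y : Matrix n n 𝕜, y.PosSemidef → 0 ≤ ω y) (hω1 : ω 1 = 1)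
    {A : Matrix n n 𝕜} (hA : A.IsHermitian) {s : Set ℝ} {f : ℝ → ℝ} (hf : ConvexOn ℝ s f)
    (hs : ∀ i, hA.eigenvalues i ∈ s) :
    (f (RCLike.re (ω A)) : 𝕜) ≤ ω (hA.cfc f) := by
  set c : n → ℝ := fun i ↦ RCLike.re (ω (hA.eigenProj i))
  have hc_nonneg (i : n) : 0 ≤ c i := (RCLike.nonneg_iff.mp (hω _ (hA.eigenProj_posSemidef i))).1
  have hc_ofReal (i : n) : (c i : 𝕜) = ω (hA.eigenProj i) := by
    obtain ⟨r, -, hr⟩ := RCLike.nonneg_iff_exists_ofReal.mp (hω _ (hA.eigenProj_posSemidef i))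
    simp only [c, ← hr, RCLike.ofReal_re]
  have hω_sum (g : n → ℝ) : ω (∑ i, (g i : 𝕜) • hA.eigenProj i) = ((∑ i, c i * g i : ℝ) : 𝕜) := by
    simp only [map_sum, map_smul, ← hc_ofReal, smul_eq_mul, RCLike.ofReal_mul, mul_comm]
  have hc_sum : ∑ i, c i = 1 := by
    have := hω_sum 1
    simp only [Pi.one_apply, RCLike.ofReal_one, one_smul, hA.sum_eigenProj, hω1, mul_one] at this
    exact_mod_cast this.symm
  rw [hA.cfc_eq_sum_smul_eigenProj, hω_sum, RCLike.ofReal_le_ofReal]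
  conv_lhs => rw [hA.eq_sum_smul_eigenProj, hω_sum, RCLike.ofReal_re]
  exact hf.map_sum_le (fun i _ ↦ hc_nonneg i) hc_sum fun i _ ↦ hs i

namespace Matrix

/-- The vector state `y ↦ ⟪U eⱼ, y (U eⱼ)⟫` of the `j`-th column of `U`. -/
noncomputable def unitaryColumnState (U : unitary (Matrix m m 𝕜)) (j : m) :
    Matrix m m 𝕜 →ₗ[𝕜] 𝕜 :=
  LinearMap.proj j ∘ₗ diagLinearMap m 𝕜 𝕜 ∘ₗ (conjStarAlgAut 𝕜 _ (star U)).toAlgEquiv.toLinearMap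

variable (U : unitary (Matrix m m 𝕜))

lemma unitaryColumnState_apply (j : m) (y : Matrix m m 𝕜) :
    unitaryColumnState U j y = (star (U : Matrix m m 𝕜) * y * U) j j := by
  simp [unitaryColumnState]

lemma unitaryColumnState_nonneg (j : m) {y : Matrix m m 𝕜} (hy : y.PosSemidef) :
    0 ≤ unitaryColumnState U j y := by
  rw [unitaryColumnState_apply, star_eq_conjTranspose]
  exact (hy.conjTranspose_mul_mul_same _).diag_nonneg

lemma unitaryColumnState_one (j : m) : unitaryColumnState U j 1 = 1 := by
  simp [unitaryColumnState]

lemma sum_unitaryColumnState (y : Matrix m m 𝕜) : ∑ j, unitaryColumnState U j y = y.trace := by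
  simp only [unitaryColumnState_apply]
  change trace (star (U : Matrix m m 𝕜) * y * (U : Matrix m m 𝕜)) = y.trace
  rw [trace_mul_cycle, Unitary.mul_star_self_of_mem U.2, one_mul]

theorem trace_cfc_map_le_trace_map_cfc (Φ : Matrix n n 𝕜 →ₗ[𝕜] Matrix m m 𝕜)
    (hΦpos : ∀ y : Matrix n n 𝕜, y.PosSemidef → (Φ y).PosSemidef) (hΦ1 : Φ 1 = 1)
    {A : Matrix n n 𝕜} (hA : A.IsHermitian) (hΦA : (Φ A).IsHermitian) {s : Set ℝ} {f : ℝ → ℝ}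
    (hf : ConvexOn ℝ s f) (hs : ∀ i, hA.eigenvalues i ∈ s) :
    (hΦA.cfc f).trace ≤ (Φ (hA.cfc f)).trace := by
  set U := hΦA.eigenvectorUnitary
  have hΦA_diag (j : m) : unitaryColumnState U j (Φ A) = hΦA.eigenvalues j := by
    simp [unitaryColumnState, U, hΦA.conjStarAlgAut_star_eigenvectorUnitary]
  rw [hΦA.trace_cfc, ← sum_unitaryColumnState U]
  refine Finset.sum_le_sum fun j _ ↦ ?_
  have := hf.map_re_apply_le_apply_cfc (ω := unitaryColumnState U j ∘ₗ Φ)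
    (fun y hy ↦ unitaryColumnState_nonneg U j (hΦpos y hy))
    (by rw [LinearMap.comp_apply, hΦ1, unitaryColumnState_one]) hA hs
  rwa [LinearMap.comp_apply, hΦA_diag, RCLike.ofReal_re] at this

end Matrix

end

theorem trace_jensen_unital_positive_map_of_posSemidef_general {n m : ℕ}
    (Φ : Matrix (Fin n) (Fin n) ℂ →ₗ[ℂ] Matrix (Fin m) (Fin m) ℂ)
    (hΦpos : ∀ y : Matrix (Fin n) (Fin n) ℂ, y.PosSemidef → (Φ y).PosSemidef)
    (hΦ1 : Φ 1 = 1)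
    {x : Matrix (Fin n) (Fin n) ℂ} (hx : x.PosSemidef)
    (f : ℝ → ℝ) (hconv : ConvexOn ℝ (Set.Ici (0 : ℝ)) f) :
    ∃ hΦx : (Φ x).PosSemidef,
      (matFun hΦx.isHermitian f).trace ≤ (Φ (matFun hx.isHermitian f)).trace :=
  have hΦx := hΦpos x hx
  ⟨hΦx, Matrix.trace_cfc_map_le_trace_map_cfc Φ hΦpos hΦ1 hx.isHermitian hΦx.isHermitian hconv
    hx.eigenvalues_nonneg⟩

/-- **Trace Jensen inequality for positive unital maps (Petz).**
If `Φ` is a positive unital linear map from `n×n` to `m×m` complex matrices, `x` is positive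
semidefinite and `f : ℝ → ℝ` is continuous and convex on `[0, ∞)`, then `Φ(x)` is positive
semidefinite and `Tr f(Φ(x)) ≤ Tr Φ(f(x))`. -/
theorem trace_jensen_unital_positive_map_of_posSemidef {n m : ℕ}
    (Φ : Matrix (Fin n) (Fin n) ℂ →ₗ[ℂ] Matrix (Fin m) (Fin m) ℂ)
    (hΦpos : ∀ y : Matrix (Fin n) (Fin n) ℂ, y.PosSemidef → (Φ y).PosSemidef)
    (hΦ1 : Φ 1 = 1)
    {x : Matrix (Fin n) (Fin n) ℂ} (hx : x.PosSemidef)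
    (f : ℝ → ℝ) (hf : Continuous f) (hconv : ConvexOn ℝ (Set.Ici (0 : ℝ)) f) :
    ∃ hΦx : (Φ x).PosSemidef,
      (matFun hΦx.isHermitian f).trace ≤ (Φ (matFun hx.isHermitian f)).trace :=
  trace_jensen_unital_positive_map_of_posSemidef_general Φ hΦpos hΦ1 hx f hconv
end

section
/- Let Φ be a positive linear map from the n×n complex matrices to the m×m complex matrices with Φ(1) ≤ 1 (a contractive positive map), let x be a positive semidefinite n×n complex matrix, and let f : ℝ → ℝ be a continuous function that is convex on [0, ∞) with f(0) = 0. Then Φ(x) is positive semidefinite and Tr f(Φ(x)) ≤ Tr Φ(f(x)). -/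
/-!
Let `u₁, …, u_m` be an orthonormal eigenbasis of `Φ(x)`, with eigenvalues `μⱼ`. Each
`ωⱼ = ⟪uⱼ, Φ(·) uⱼ⟫` is a positive functional with `ωⱼ(1) ≤ 1`, so on the spectral projections
`Pᵢ` of `x = ∑ᵢ λᵢ Pᵢ` it gives weights `tᵢⱼ = ωⱼ(Pᵢ) ≥ 0` with `∑ᵢ tᵢⱼ ≤ 1`. Then
`μⱼ = ωⱼ(x) = ∑ᵢ tᵢⱼ λᵢ`, and Jensen's inequality for these sub-probability weights (the missing
mass sits at `0`, where `f` vanishes) gives `f(μⱼ) ≤ ∑ᵢ tᵢⱼ f(λᵢ) = ωⱼ(f(x))`. Summing over `j`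
yields `Tr f(Φ(x)) ≤ Tr Φ(f(x))`.
-/

open scoped ComplexOrder

open Finset Matrix Unitary

theorem ConvexOn.map_sum_le_of_sum_le_one {𝕜 E β ι : Type*} [Field 𝕜] [LinearOrder 𝕜]
    [IsStrictOrderedRing 𝕜] [AddCommGroup E] [AddCommGroup β] [PartialOrder β]
    [IsOrderedAddMonoid β] [Module 𝕜 E] [Module 𝕜 β] [IsStrictOrderedModule 𝕜 β]
    {s : Set E} {f : E → β} {t : Finset ι} {w : ι → 𝕜} {p : ι → E}
    (hf : ConvexOn 𝕜 s f) (h0s : 0 ∈ s) (hf0 : f 0 ≤ 0) (h₀ : ∀ i ∈ t, 0 ≤ w i)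
    (h₁ : ∑ i ∈ t, w i ≤ 1) (hmem : ∀ i ∈ t, p i ∈ s) :
    f (∑ i ∈ t, w i • p i) ≤ ∑ i ∈ t, w i • f (p i) := by
  have h := hf.map_sum_le (t := insertNone t) (w := fun o => o.elim (1 - ∑ i ∈ t, w i) w)
    (p := fun o => o.elim 0 p) (by rintro (_ | i) hi <;> simp_all)
    (by simp [sum_insertNone]) (by rintro (_ | i) hi <;> simp_all)
  simp only [sum_insertNone, Option.elim_none, Option.elim_some, smul_zero, zero_add] at h
  exact h.trans (add_le_of_nonpos_left (smul_nonpos_of_nonneg_of_nonpos (sub_nonneg.2 h₁) hf0))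

namespace Matrix

variable {n 𝕜 : Type*} [RCLike 𝕜] [Fintype n] [DecidableEq n]

omit [Fintype n] in
lemma posSemidef_single_self_one (i : n) : (single i i (1 : 𝕜)).PosSemidef := by
  rw [← diagonal_single]
  exact PosSemidef.diagonal (Pi.single_nonneg.2 zero_le_one)

lemma PosSemidef.conjStarAlgAut {M : Matrix n n 𝕜} (hM : M.PosSemidef)
    (u : unitary (Matrix n n 𝕜)) : (conjStarAlgAut 𝕜 _ u M).PosSemidef := by
  simpa [star_eq_conjTranspose] using hM.mul_mul_conjTranspose_same (u : Matrix n n 𝕜)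

/-- `(u⋆ M u)ⱼⱼ = ⟪u eⱼ, M (u eⱼ)⟫`: the vector state of the `j`-th column of `u`. -/
noncomputable def conjDiag (u : unitary (Matrix n n 𝕜)) (j : n) : Matrix n n 𝕜 →ₗ[𝕜] 𝕜 where
  toFun M := conjStarAlgAut 𝕜 _ (star u) M j j
  map_add' M N := by simp only [map_add, add_apply]
  map_smul' c M := by simp only [map_smul, smul_apply, RingHom.id_apply]

variable (u : unitary (Matrix n n 𝕜))

lemma conjDiag_apply (j : n) (M : Matrix n n 𝕜) :
    conjDiag u j M = conjStarAlgAut 𝕜 _ (star u) M j j := rfl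

lemma conjDiag_nonneg {M : Matrix n n 𝕜} (hM : M.PosSemidef) (j : n) : 0 ≤ conjDiag u j M :=
  (hM.conjStarAlgAut (star u)).diag_nonneg

@[simp]
lemma conjDiag_one (j : n) : conjDiag u j 1 = 1 := by
  simp [conjDiag_apply]

lemma sum_conjDiag (M : Matrix n n 𝕜) : ∑ j, conjDiag u j M = M.trace := by
  change trace (conjStarAlgAut 𝕜 _ (star u) M) = _
  rw [conjStarAlgAut_star_apply, trace_mul_cycle, mul_star_self_of_mem u.prop, one_mul]

namespace IsHermitian

variable {A : Matrix n n 𝕜} (hA : A.IsHermitian)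

lemma cfc_eq_sum_smul (g : ℝ → ℝ) :
    hA.cfc g = ∑ i, (g (hA.eigenvalues i) : 𝕜) •
      conjStarAlgAut 𝕜 _ hA.eigenvectorUnitary (single i i 1) := by
  simp_rw [IsHermitian.cfc, ← sum_single_eq_diagonal, map_sum, ← map_smul, smul_single,
    smul_eq_mul, mul_one]
  rfl

lemma cfc_id_eq : hA.cfc id = A := hA.spectral_theorem.symm

lemma cfc_one_eq : hA.cfc 1 = 1 := by
  simp [IsHermitian.cfc, Pi.one_def, Function.comp_def]

lemma conjDiag_cfc (g : ℝ → ℝ) (j : n) :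
    conjDiag hA.eigenvectorUnitary j (hA.cfc g) = g (hA.eigenvalues j) := by
  rw [conjDiag_apply, IsHermitian.cfc, ← conjStarAlgAut_mul_apply, star_mul_self, map_one]
  simp

lemma conjDiag_self (j : n) : conjDiag hA.eigenvectorUnitary j A = hA.eigenvalues j := by
  simpa [hA.cfc_id_eq] using hA.conjDiag_cfc id j

end IsHermitian

end Matrix

theorem ConvexOn.map_apply_le_apply_cfc {n 𝕜 : Type*} [RCLike 𝕜] [Fintype n] [DecidableEq n]
    {ω : Matrix n n 𝕜 →ₗ[𝕜] 𝕜} (hω : ∀ y : Matrix n n 𝕜, y.PosSemidef → 0 ≤ ω y)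
    (hω1 : ω 1 ≤ 1) {x : Matrix n n 𝕜} (hx : x.PosSemidef) {f : ℝ → ℝ}
    (hf : ConvexOn ℝ (Set.Ici 0) f) (hf0 : f 0 ≤ 0) :
    (f (RCLike.re (ω x)) : 𝕜) ≤ ω (hx.isHermitian.cfc f) := by
  have hA : x.IsHermitian := hx.isHermitian
  choose w hw₀ hw using fun i => RCLike.nonneg_iff_exists_ofReal.1 <|
    hω _ ((posSemidef_single_self_one (𝕜 := 𝕜) i).conjStarAlgAut hA.eigenvectorUnitary)
  have hω_cfc (g : ℝ → ℝ) : ω (hA.cfc g) = ((∑ i, w i • g (hA.eigenvalues i) : ℝ) : 𝕜) := by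
    simp only [hA.cfc_eq_sum_smul, map_sum, map_smul, ← hw, smul_eq_mul,
      RCLike.ofReal_mul, mul_comm]
  have hw₁ : ∑ i, w i ≤ 1 := by
    rw [← hA.cfc_one_eq, hω_cfc, ← RCLike.ofReal_one, RCLike.ofReal_le_ofReal] at hω1
    simpa using hω1
  rw [← congrArg ω hA.cfc_id_eq, hω_cfc, hω_cfc, RCLike.ofReal_re, RCLike.ofReal_le_ofReal]
  exact hf.map_sum_le_of_sum_le_one Set.self_mem_Ici hf0 (fun i _ => hw₀ i) hw₁
    (fun i _ => hx.eigenvalues_nonneg i)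

theorem trace_jensen_contractive_positive_map_of_posSemidef_general {n m : ℕ}
    (Φ : Matrix (Fin n) (Fin n) ℂ →ₗ[ℂ] Matrix (Fin m) (Fin m) ℂ)
    (hΦpos : ∀ y : Matrix (Fin n) (Fin n) ℂ, y.PosSemidef → (Φ y).PosSemidef)
    (hΦ1 : (1 - Φ 1).PosSemidef)
    {x : Matrix (Fin n) (Fin n) ℂ} (hx : x.PosSemidef)
    (f : ℝ → ℝ) (hconv : ConvexOn ℝ (Set.Ici (0 : ℝ)) f)
    (hf0 : f 0 = 0) :
    ∃ hΦx : (Φ x).PosSemidef,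
      (matFun hΦx.isHermitian f).trace ≤ (Φ (matFun hx.isHermitian f)).trace := by
  refine ⟨hΦpos x hx, ?_⟩
  set hB := (hΦpos x hx).isHermitian
  set ψ := conjDiag hB.eigenvectorUnitary
  calc (matFun hB f).trace = ∑ j, (f (RCLike.re (ψ j (Φ x))) : ℂ) := by
        simp only [← sum_conjDiag hB.eigenvectorUnitary, matFun, hB.conjDiag_cfc, ψ,
          hB.conjDiag_self, RCLike.ofReal_re]
        rfl
    _ ≤ ∑ j, ψ j (Φ (matFun hx.isHermitian f)) := by
        refine Finset.sum_le_sum fun j _ => hconv.map_apply_le_apply_cfc (ω := ψ j ∘ₗ Φ)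
          (fun y hy => conjDiag_nonneg _ (hΦpos y hy) j) ?_ hx hf0.le
        simpa [sub_nonneg] using conjDiag_nonneg _ hΦ1 j
    _ = (Φ (matFun hx.isHermitian f)).trace := sum_conjDiag _ _

/-- **Trace Jensen inequality for contractive positive maps (Petz).**
If `Φ` is a positive linear map from `n×n` to `m×m` complex matrices with `Φ(1) ≤ 1`
(in the Loewner order, i.e. `1 - Φ(1)` is positive semidefinite), `x` is positive
semidefinite and `f : ℝ → ℝ` is continuous, convex on `[0, ∞)` and `f(0) = 0`, then `Φ(x)` is
positive semidefinite and `Tr f(Φ(x)) ≤ Tr Φ(f(x))`. -/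
theorem trace_jensen_contractive_positive_map_of_posSemidef {n m : ℕ}
    (Φ : Matrix (Fin n) (Fin n) ℂ →ₗ[ℂ] Matrix (Fin m) (Fin m) ℂ)
    (hΦpos : ∀ y : Matrix (Fin n) (Fin n) ℂ, y.PosSemidef → (Φ y).PosSemidef)
    (hΦ1 : (1 - Φ 1).PosSemidef)
    {x : Matrix (Fin n) (Fin n) ℂ} (hx : x.PosSemidef)
    (f : ℝ → ℝ) (hf : Continuous f) (hconv : ConvexOn ℝ (Set.Ici (0 : ℝ)) f)
    (hf0 : f 0 = 0) :
    ∃ hΦx : (Φ x).PosSemidef,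
      (matFun hΦx.isHermitian f).trace ≤ (Φ (matFun hx.isHermitian f)).trace :=
  trace_jensen_contractive_positive_map_of_posSemidef_general Φ hΦpos hΦ1 hx f hconv hf0
end

section
/- Let Φ be a positive unital linear map from the n×n complex matrices to themselves, let x be a Hermitian n×n complex matrix, let f : ℝ → ℝ be a continuous convex function, and let I ⊆ ℝ be an interval on which f is monotone (either increasing or decreasing) and on which f(t) ≥ 0. Set p := e_I(Φ(x)), the spectral projection of Φ(x) on I. Then p·Φ(f(x))·p is positive semidefinite, and for every s > 0 one has rank e_{(s,∞)}(p·f(Φ(x))·p) ≤ rank e_{(s,∞)}(p·Φ(f(x))·p) (equivalently, the first spectral projection is Murray–von Neumann subequivalent to the second). -/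
open Matrix
open scoped ComplexOrder

lemma matFun_isHermitian {k : ℕ} {A : Matrix (Fin k) (Fin k) ℂ} (hA : A.IsHermitian)
    (g : ℝ → ℝ) : (matFun hA g).IsHermitian := by
  rw [matFun, ← hA.cfc_eq g]
  exact cfc_predicate g A

/-- The spectral projection `e_S(A) = ∑_{i : λᵢ ∈ S} Pᵢ` of a Hermitian matrix `A`
on a set `S ⊆ ℝ`. -/
noncomputable def specProj {k : ℕ} {A : Matrix (Fin k) (Fin k) ℂ} (hA : A.IsHermitian)
    (S : Set ℝ) : Matrix (Fin k) (Fin k) ℂ := matFun hA (Set.indicator S 1)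

/-!
Convexity gives a supporting line `f ≥ f t + d (· - t)`. Applying the positive unital map `Φ`
to `f(x) ≥ f t + d (x - t)` and testing against a vector `ξ` whose Rayleigh quotient for `Φ(x)` is
`t` yields the Jensen-type bound `⟪ξ, Φ(f(x)) ξ⟫ ≥ f(t) ‖ξ‖²`. For `ξ` in the range of a spectral
projection `e_S(Φ(x))` with `S` an interval, the Rayleigh quotient is a convex combination of
eigenvalues lying in `S`, hence lies in `S`.

With `S = I` and `f ≥ 0` on `I` this gives positivity of `p Φ(f(x)) p`. As `s > 0`,
`e_(s,∞)(p f(Φ(x)) p) = e_J(Φ(x))` for `J = {t ∈ I | s < f t}`, an interval by monotonicity.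
On the range of `e_J(Φ(x))` the quadratic form of `p Φ(f(x)) p` exceeds `s ‖ξ‖²`, on the range
of `e_(-∞,s](p Φ(f(x)) p)` it is at most `s ‖ξ‖²`; so these ranges meet only in `0`, and counting
dimensions gives the rank inequality.
-/

theorem matFun_eq_cfc {k : ℕ} {A : Matrix (Fin k) (Fin k) ℂ} (hA : A.IsHermitian) (g : ℝ → ℝ) :
    matFun hA g = cfc g A :=
  (hA.cfc_eq g).symm

theorem specProj_eq_cfc {k : ℕ} {A : Matrix (Fin k) (Fin k) ℂ} (hA : A.IsHermitian) (S : Set ℝ) :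
    specProj hA S = cfc (S.indicator 1) A :=
  matFun_eq_cfc hA _

theorem Matrix.IsHermitian.star_dotProduct_mul_mul_mulVec {ι α : Type*} [Fintype ι]
    [CommSemiring α] [StarRing α] {p : Matrix ι ι α} (hp : p.IsHermitian)
    (M : Matrix ι ι α) (v : ι → α) :
    star v ⬝ᵥ (p * M * p) *ᵥ v = star (p *ᵥ v) ⬝ᵥ M *ᵥ (p *ᵥ v) := by
  rw [star_mulVec, hp.eq, ← mulVec_mulVec, ← mulVec_mulVec, dotProduct_mulVec]

theorem Matrix.IsHermitian.mul_mul_of_isHermitian {ι α : Type*} [Fintype ι] [CommSemiring α]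
    [StarRing α] {p M : Matrix ι ι α} (hp : p.IsHermitian) (hM : M.IsHermitian) :
    (p * M * p).IsHermitian := by
  simpa only [hp.eq] using isHermitian_mul_mul_conjTranspose p hM

section Spectral

variable {ι : Type*} [Fintype ι] [DecidableEq ι]

theorem Matrix.cfc_indicator_one_mul_cfc_indicator_one (A : Matrix ι ι ℂ) (S T : Set ℝ) :
    cfc (S.indicator 1) A * cfc (T.indicator 1) A = cfc ((S ∩ T).indicator 1) A := by
  rw [Set.inter_indicator_one, ← cfc_mul _ _ A (A.finite_real_spectrum.continuousOn _)
    (A.finite_real_spectrum.continuousOn _)]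
  rfl

theorem Matrix.cfc_indicator_one_mul_self (A : Matrix ι ι ℂ) (S : Set ℝ) :
    cfc (S.indicator 1) A * cfc (S.indicator 1) A = cfc (S.indicator 1) A := by
  rw [cfc_indicator_one_mul_cfc_indicator_one, Set.inter_self]

namespace Matrix.IsHermitian

variable {A : Matrix ι ι ℂ}

theorem star_dotProduct_cfc_mulVec (hA : A.IsHermitian) (g : ℝ → ℝ) (v : ι → ℂ) :
    star v ⬝ᵥ cfc g A *ᵥ v = ∑ i, (g (hA.eigenvalues i) : ℂ) *
      Complex.normSq ((star (hA.eigenvectorUnitary : Matrix ι ι ℂ) *ᵥ v) i) := by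
  set U : Matrix ι ι ℂ := ↑hA.eigenvectorUnitary
  set c : ι → ℂ := star U *ᵥ v
  have hc : star v ᵥ* U = star c := by
    rw [star_mulVec, star_eq_conjTranspose, conjTranspose_conjTranspose]
  rw [hA.cfc_eq, IsHermitian.cfc, Unitary.conjStarAlgAut_apply, ← mulVec_mulVec,
    ← mulVec_mulVec, dotProduct_mulVec, hc]
  simp only [mulVec_diagonal, dotProduct, Pi.star_apply, Function.comp_apply]
  refine Finset.sum_congr rfl fun i _ => ?_
  rw [mul_left_comm, Complex.normSq_eq_conj_mul_self]
  rfl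

theorem eigenvectorUnitary_star_mulVec_apply_eq_zero (hA : A.IsHermitian) {g : ℝ → ℝ}
    {v : ι → ℂ} (hv : cfc g A *ᵥ v = v) {i : ι} (hi : g (hA.eigenvalues i) = 0) :
    (star (hA.eigenvectorUnitary : Matrix ι ι ℂ) *ᵥ v) i = 0 := by
  set U : Matrix ι ι ℂ := ↑hA.eigenvectorUnitary
  have hdiag : star U *ᵥ v = diagonal (RCLike.ofReal ∘ g ∘ hA.eigenvalues) *ᵥ (star U *ᵥ v) := by
    conv_lhs => rw [← hv, hA.cfc_eq, IsHermitian.cfc, Unitary.conjStarAlgAut_apply,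
      mulVec_mulVec, ← mul_assoc, ← mul_assoc, UnitaryGroup.star_mul_self, one_mul,
      ← mulVec_mulVec]
  rw [hdiag, mulVec_diagonal]
  simp [hi]

theorem rank_cfc (hA : A.IsHermitian) (g : ℝ → ℝ) :
    (cfc g A).rank = Fintype.card {i // g (hA.eigenvalues i) ≠ 0} := by
  have hU := UnitaryGroup.det_isUnit hA.eigenvectorUnitary
  have hU' : IsUnit (star (hA.eigenvectorUnitary : Matrix ι ι ℂ)).det := by
    rw [star_eq_conjTranspose, det_conjTranspose]
    exact hU.star
  rw [hA.cfc_eq, IsHermitian.cfc, Unitary.conjStarAlgAut_apply,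
    rank_mul_eq_left_of_isUnit_det _ _ hU', rank_mul_eq_right_of_isUnit_det _ _ hU,
    rank_diagonal]
  simp

theorem rank_cfc_indicator_add_rank_cfc_indicator_compl (hA : A.IsHermitian) (S : Set ℝ) :
    (cfc (S.indicator 1) A).rank + (cfc (Sᶜ.indicator 1) A).rank = Fintype.card ι := by
  classical
  rw [hA.rank_cfc, hA.rank_cfc]
  simp only [Set.indicator_apply, Set.mem_compl_iff, Pi.one_apply, ne_eq, ite_eq_right_iff,
    one_ne_zero, imp_false, not_not, Fintype.card_subtype_compl]
  exact Nat.add_sub_of_le (Fintype.card_subtype_le _)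

theorem exists_mem_dotProduct_mulVec_eq_mul (hA : A.IsHermitian) {S : Set ℝ} (hS : S.OrdConnected)
    {ξ : ι → ℂ} (hξ0 : ξ ≠ 0) (hξ : cfc (S.indicator 1) A *ᵥ ξ = ξ) :
    ∃ t ∈ S, star ξ ⬝ᵥ A *ᵥ ξ = t * (star ξ ⬝ᵥ ξ) := by
  set w : ι → ℝ := fun i =>
    Complex.normSq ((star (hA.eigenvectorUnitary : Matrix ι ι ℂ) *ᵥ ξ) i)
  have hAξ : star ξ ⬝ᵥ A *ᵥ ξ = ∑ i, (hA.eigenvalues i : ℂ) * w i := by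
    have h := hA.star_dotProduct_cfc_mulVec id ξ
    rwa [cfc_id ℝ A hA.isSelfAdjoint] at h
  have hnorm : star ξ ⬝ᵥ ξ = ∑ i, (w i : ℂ) := by
    simpa [cfc_one ℝ A] using hA.star_dotProduct_cfc_mulVec 1 ξ
  have hpos : 0 < ∑ i, w i := by
    have := dotProduct_star_self_pos_iff.2 hξ0
    rwa [hnorm, ← Complex.ofReal_sum, Complex.zero_lt_real] at this
  have hsupp : ∀ i, w i ≠ 0 → hA.eigenvalues i ∈ S := by
    intro i hi
    by_contra hiS
    exact hi (by simp [w, hA.eigenvectorUnitary_star_mulVec_apply_eq_zero hξ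
      (Set.indicator_of_notMem hiS _)])
  refine ⟨Finset.univ.centerMass w hA.eigenvalues, ?_, ?_⟩
  · rw [← Finset.centerMass_filter_ne_zero]
    refine hS.convex.centerMass_mem (fun i _ => Complex.normSq_nonneg _) ?_
      fun i hi => hsupp i (Finset.mem_filter.1 hi).2
    rwa [Finset.sum_filter_ne_zero]
  · rw [hAξ, hnorm, Finset.centerMass, smul_eq_mul, ← Complex.ofReal_sum, ← Complex.ofReal_mul,
      mul_comm, ← mul_assoc, mul_inv_cancel₀ hpos.ne', one_mul]
    push_cast [smul_eq_mul, mul_comm]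
    rfl

theorem finrank_le_rank_cfc_indicator_Ioi (hA : A.IsHermitian) {s : ℝ}
    (V : Submodule ℂ (ι → ℂ))
    (hV : ∀ ξ ∈ V, ξ ≠ 0 → (s : ℂ) * (star ξ ⬝ᵥ ξ) < star ξ ⬝ᵥ A *ᵥ ξ) :
    Module.finrank ℂ V ≤ (cfc ((Set.Ioi s).indicator 1) A).rank := by
  have hrank := hA.rank_cfc_indicator_add_rank_cfc_indicator_compl (Set.Iic s)
  rw [Set.compl_Iic] at hrank
  set P := cfc ((Set.Iic s).indicator 1) A
  have hdisj : Disjoint V (LinearMap.range P.mulVecLin) := by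
    rw [Submodule.disjoint_def]
    rintro _ hξV ⟨u, rfl⟩
    by_contra hξ0
    have hfix : P *ᵥ P.mulVecLin u = P.mulVecLin u := by
      rw [mulVecLin_apply, mulVec_mulVec, cfc_indicator_one_mul_self]
    obtain ⟨t, hts, ht⟩ := hA.exists_mem_dotProduct_mulVec_eq_mul Set.ordConnected_Iic hξ0 hfix
    refine (hV _ hξV hξ0).not_ge ?_
    rw [ht]
    exact mul_le_mul_of_nonneg_right (by exact_mod_cast hts) (dotProduct_star_self_nonneg _)
  have hdim := Submodule.finrank_add_finrank_le_of_disjoint hdisj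
  rw [Module.finrank_fintype_fun_eq_card] at hdim
  change _ + P.rank ≤ _ at hdim
  omega

end Matrix.IsHermitian

end Spectral

theorem ConvexOn.exists_add_mul_sub_le {f : ℝ → ℝ} (hf : ConvexOn ℝ Set.univ f) (t : ℝ) :
    ∃ d : ℝ, ∀ u, f t + d * (u - t) ≤ f u := by
  have ht : t ∈ interior Set.univ := by simp
  refine ⟨derivWithin f (Set.Ioi t) t, fun u => ?_⟩
  rcases lt_trichotomy u t with hut | rfl | htu
  · have h := (hf.slope_le_leftDeriv_of_mem_interior trivial ht hut).trans
      (hf.leftDeriv_le_rightDeriv_of_mem_interior ht)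
    rw [slope_def_field, div_le_iff₀ (sub_pos.2 hut)] at h
    linarith
  · simp
  · have h := hf.rightDeriv_le_slope_of_mem_interior ht trivial htu
    rw [slope_def_field, le_div_iff₀ (sub_pos.2 htu)] at h
    linarith

theorem Set.OrdConnected.sep_lt_of_monotoneOn_or_antitoneOn {α β : Type*} [Preorder α]
    [Preorder β] {I : Set α} {f : α → β} (hI : I.OrdConnected)
    (hf : MonotoneOn f I ∨ AntitoneOn f I) (s : β) : {t ∈ I | s < f t}.OrdConnected := by
  refine ⟨fun a ha b hb c hc => ⟨hI.out ha.1 hb.1 hc, ?_⟩⟩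
  rcases hf with hf | hf
  · exact ha.2.trans_le (hf ha.1 (hI.out ha.1 hb.1 hc) hc.1)
  · exact hb.2.trans_le (hf (hI.out ha.1 hb.1 hc) hb.1 hc.2)

section PositiveMap

open scoped MatrixOrder

variable {ι κ : Type*} [Fintype ι] [DecidableEq ι] {Φ : Matrix ι ι ℂ →ₗ[ℂ] Matrix κ κ ℂ}

theorem isHermitian_map_of_posSemidef_map
    (hΦpos : ∀ y : Matrix ι ι ℂ, y.PosSemidef → (Φ y).PosSemidef) {y : Matrix ι ι ℂ}
    (hy : y.IsHermitian) : (Φ y).IsHermitian := by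
  rw [← CFC.posPart_sub_negPart y hy, map_sub]
  exact (hΦpos _ (CFC.posPart_nonneg y).posSemidef).isHermitian.sub
    (hΦpos _ (CFC.negPart_nonneg y).posSemidef).isHermitian

variable [Fintype κ] [DecidableEq κ] {x : Matrix ι ι ℂ} {f : ℝ → ℝ}

theorem mul_dotProduct_le_dotProduct_map_cfc
    (hΦpos : ∀ y : Matrix ι ι ℂ, y.PosSemidef → (Φ y).PosSemidef) (hΦ1 : Φ 1 = 1)
    (hx : x.IsHermitian) (hf : ConvexOn ℝ Set.univ f)
    {ξ : κ → ℂ} {t : ℝ} (ht : star ξ ⬝ᵥ Φ x *ᵥ ξ = t * (star ξ ⬝ᵥ ξ)) :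
    (f t : ℂ) * (star ξ ⬝ᵥ ξ) ≤ star ξ ⬝ᵥ Φ (cfc f x) *ᵥ ξ := by
  obtain ⟨d, hd⟩ := hf.exists_add_mul_sub_le t
  have hfin := x.finite_real_spectrum
  have hle : cfc (fun u => (f t - d * t) + d * u) x ≤ cfc f x :=
    cfc_mono (fun u _ => by linarith [hd u]) (hfin.continuousOn _) (hfin.continuousOn _)
  rw [cfc_const_add (f t - d * t) (fun u => d * u) x (hfin.continuousOn _) hx.isSelfAdjoint,
    cfc_const_mul_id _ _ hx.isSelfAdjoint,
    Algebra.algebraMap_eq_smul_one, Matrix.le_iff] at hle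
  have key := (hΦpos _ hle).dotProduct_mulVec_nonneg ξ
  rw [map_sub, map_add, Φ.map_smul_of_tower, Φ.map_smul_of_tower, hΦ1, sub_mulVec, add_mulVec,
    smul_mulVec, smul_mulVec, one_mulVec, dotProduct_sub, dotProduct_add, dotProduct_smul,
    dotProduct_smul, ht, sub_nonneg, Complex.real_smul, Complex.real_smul] at key
  refine le_of_eq_of_le ?_ key
  push_cast
  ring

theorem exists_mem_mul_le_dotProduct_map_cfc
    (hΦpos : ∀ y : Matrix ι ι ℂ, y.PosSemidef → (Φ y).PosSemidef) (hΦ1 : Φ 1 = 1)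
    (hx : x.IsHermitian) (hf : ConvexOn ℝ Set.univ f) {S : Set ℝ} (hS : S.OrdConnected)
    {ξ : κ → ℂ} (hξ0 : ξ ≠ 0) (hξ : cfc (S.indicator 1) (Φ x) *ᵥ ξ = ξ) :
    ∃ t ∈ S, (f t : ℂ) * (star ξ ⬝ᵥ ξ) ≤ star ξ ⬝ᵥ Φ (cfc f x) *ᵥ ξ := by
  obtain ⟨t, htS, ht⟩ :=
    (isHermitian_map_of_posSemidef_map hΦpos hx).exists_mem_dotProduct_mulVec_eq_mul hS hξ0 hξ
  exact ⟨t, htS, mul_dotProduct_le_dotProduct_map_cfc hΦpos hΦ1 hx hf ht⟩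

theorem posSemidef_cfc_indicator_mul_map_cfc_mul
    (hΦpos : ∀ y : Matrix ι ι ℂ, y.PosSemidef → (Φ y).PosSemidef) (hΦ1 : Φ 1 = 1)
    (hx : x.IsHermitian) (hf : ConvexOn ℝ Set.univ f) {I : Set ℝ} (hI : I.OrdConnected)
    (hfI : ∀ t ∈ I, 0 ≤ f t) :
    (cfc (I.indicator 1) (Φ x) * Φ (cfc f x) * cfc (I.indicator 1) (Φ x)).PosSemidef := by
  set p := cfc (I.indicator 1) (Φ x)
  have hp : p.IsHermitian := cfc_predicate _ _
  have hM : (Φ (cfc f x)).IsHermitian :=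
    isHermitian_map_of_posSemidef_map hΦpos (cfc_predicate _ _)
  refine .of_dotProduct_mulVec_nonneg (hp.mul_mul_of_isHermitian hM) fun v => ?_
  rw [hp.star_dotProduct_mul_mul_mulVec]
  by_cases h0 : p *ᵥ v = 0
  · rw [h0, mulVec_zero, dotProduct_zero]
  obtain ⟨t, htI, ht⟩ := exists_mem_mul_le_dotProduct_map_cfc hΦpos hΦ1 hx hf hI h0
    (by rw [mulVec_mulVec, cfc_indicator_one_mul_self])
  exact (mul_nonneg (by exact_mod_cast hfI t htI) (dotProduct_star_self_nonneg _)).trans ht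

theorem rank_cfc_indicator_Ioi_mul_cfc_mul_le
    (hΦpos : ∀ y : Matrix ι ι ℂ, y.PosSemidef → (Φ y).PosSemidef) (hΦ1 : Φ 1 = 1)
    (hx : x.IsHermitian) (hf : ConvexOn ℝ Set.univ f) {I : Set ℝ} (hI : I.OrdConnected)
    (hmono : MonotoneOn f I ∨ AntitoneOn f I) {s : ℝ} (hs : 0 < s) :
    (cfc ((Set.Ioi s).indicator 1)
        (cfc (I.indicator 1) (Φ x) * cfc f (Φ x) * cfc (I.indicator 1) (Φ x))).rank ≤
      (cfc ((Set.Ioi s).indicator 1)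
        (cfc (I.indicator 1) (Φ x) * Φ (cfc f x) * cfc (I.indicator 1) (Φ x))).rank := by
  set y := Φ x
  set p := cfc (I.indicator 1) y
  set J := {t ∈ I | s < f t}
  have hy : y.IsHermitian := isHermitian_map_of_posSemidef_map hΦpos hx
  have hp : p.IsHermitian := cfc_predicate _ _
  have hM : (Φ (cfc f x)).IsHermitian :=
    isHermitian_map_of_posSemidef_map hΦpos (cfc_predicate _ _)
  have hB : (p * Φ (cfc f x) * p).IsHermitian := hp.mul_mul_of_isHermitian hM
  have hfin := y.finite_real_spectrum
  have hcompress : cfc ((Set.Ioi s).indicator 1) (p * cfc f y * p) = cfc (J.indicator 1) y := by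
    rw [← cfc_mul _ _ y (hfin.continuousOn _) (hfin.continuousOn _),
      ← cfc_mul _ _ y (hfin.continuousOn _) (hfin.continuousOn _),
      ← cfc_comp _ _ y hy.isSelfAdjoint ((hfin.image _).continuousOn _) (hfin.continuousOn _)]
    congr 1
    funext t
    classical
    by_cases ht : t ∈ I <;> simp [J, ht, Set.indicator_apply, hs.not_gt]
  rw [hcompress]
  refine hB.finrank_le_rank_cfc_indicator_Ioi (LinearMap.range (cfc (J.indicator 1) y).mulVecLin)
    ?_
  rintro _ ⟨u, rfl⟩ hξ0
  set ξ := (cfc (J.indicator 1) y).mulVecLin u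
  have hξJ : cfc (J.indicator 1) y *ᵥ ξ = ξ := by
    simp only [ξ, mulVecLin_apply, mulVec_mulVec, cfc_indicator_one_mul_self]
  have hξp : p *ᵥ ξ = ξ := by
    rw [← hξJ, mulVec_mulVec, cfc_indicator_one_mul_cfc_indicator_one,
      Set.inter_eq_right.2 (Set.sep_subset _ _)]
  obtain ⟨t, ⟨-, hst⟩, ht⟩ := exists_mem_mul_le_dotProduct_map_cfc hΦpos hΦ1 hx hf
    (hI.sep_lt_of_monotoneOn_or_antitoneOn hmono s) hξ0 hξJ
  rw [hp.star_dotProduct_mul_mul_mulVec, hξp]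
  exact (mul_lt_mul_of_pos_right (by exact_mod_cast hst)
    (dotProduct_star_self_pos_iff.2 hξ0)).trans_le ht

end PositiveMap

theorem specProj_rank_le_of_unital_positive_map_general {n : ℕ}
    (Φ : Matrix (Fin n) (Fin n) ℂ →ₗ[ℂ] Matrix (Fin n) (Fin n) ℂ)
    (hΦpos : ∀ y : Matrix (Fin n) (Fin n) ℂ, y.PosSemidef → (Φ y).PosSemidef)
    (hΦ1 : Φ 1 = 1)
    {x : Matrix (Fin n) (Fin n) ℂ} (hx : x.IsHermitian)
    (f : ℝ → ℝ) (hconv : ConvexOn ℝ Set.univ f)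
    (I : Set ℝ) (hI : I.OrdConnected)
    (hmono : MonotoneOn f I ∨ AntitoneOn f I) (hfI : ∀ t ∈ I, 0 ≤ f t) :
    ∀ hΦx : (Φ x).IsHermitian,
      (specProj hΦx I * Φ (matFun hx f) * specProj hΦx I).PosSemidef ∧
      ∀ s : ℝ, 0 < s →
        ∀ (h1 : (specProj hΦx I * matFun hΦx f * specProj hΦx I).IsHermitian)
          (h2 : (specProj hΦx I * Φ (matFun hx f) * specProj hΦx I).IsHermitian),
          (specProj h1 (Set.Ioi s)).rank ≤ (specProj h2 (Set.Ioi s)).rank := by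
  intro hΦx
  refine ⟨?_, fun s hs h1 h2 => ?_⟩
  · simpa only [specProj_eq_cfc, matFun_eq_cfc] using
      posSemidef_cfc_indicator_mul_map_cfc_mul hΦpos hΦ1 hx hconv hI hfI
  · simpa only [specProj_eq_cfc, matFun_eq_cfc] using
      rank_cfc_indicator_Ioi_mul_cfc_mul_le hΦpos hΦ1 hx hconv hI hmono hs

/-- **Spectral comparison on an interval where `f` is monotone and nonnegative.**
Let `Φ` be a positive unital linear map on `n×n` matrices, `x` Hermitian, `f` continuous
convex, and `I` an interval on which `f` is monotone and nonnegative; set `p = e_I(Φ(x))`.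
Then `p·Φ(f(x))·p` is positive semidefinite and, for every `s > 0`,
`rank e_(s,∞)(p·f(Φ(x))·p) ≤ rank e_(s,∞)(p·Φ(f(x))·p)` (Murray–von Neumann
subequivalence of the spectral projections). -/
theorem specProj_rank_le_of_unital_positive_map {n : ℕ}
    (Φ : Matrix (Fin n) (Fin n) ℂ →ₗ[ℂ] Matrix (Fin n) (Fin n) ℂ)
    (hΦpos : ∀ y : Matrix (Fin n) (Fin n) ℂ, y.PosSemidef → (Φ y).PosSemidef)
    (hΦ1 : Φ 1 = 1)
    {x : Matrix (Fin n) (Fin n) ℂ} (hx : x.IsHermitian)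
    (f : ℝ → ℝ) (hf : Continuous f) (hconv : ConvexOn ℝ Set.univ f)
    (I : Set ℝ) (hI : I.OrdConnected)
    (hmono : MonotoneOn f I ∨ AntitoneOn f I) (hfI : ∀ t ∈ I, 0 ≤ f t) :
    ∀ hΦx : (Φ x).IsHermitian,
      (specProj hΦx I * Φ (matFun hx f) * specProj hΦx I).PosSemidef ∧
      ∀ s : ℝ, 0 < s →
        ∀ (h1 : (specProj hΦx I * matFun hΦx f * specProj hΦx I).IsHermitian)
          (h2 : (specProj hΦx I * Φ (matFun hx f) * specProj hΦx I).IsHermitian),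
          (specProj h1 (Set.Ioi s)).rank ≤ (specProj h2 (Set.Ioi s)).rank :=
  specProj_rank_le_of_unital_positive_map_general Φ hΦpos hΦ1 hx f hconv I hI hmono hfI
end

section
/- Let Φ be a positive linear map from the n×n complex matrices to themselves with Φ(1) ≤ 1 (a contractive positive map), let x be a Hermitian n×n complex matrix, let f : ℝ → ℝ be a continuous convex function with f(0) = 0, and let I ⊆ ℝ be an interval on which f is monotone and on which f(t) ≥ 0. Set p := e_I(Φ(x)), the spectral projection of Φ(x) on I. Then p·Φ(f(x))·p is positive semidefinite, and for every s > 0 one has rank e_{(s,∞)}(p·f(Φ(x))·p) ≤ rank e_{(s,∞)}(p·Φ(f(x))·p). -/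
open Matrix
open scoped ComplexOrder

/-!
Write `μ = ⟨ξ, Φ(x) ξ⟩ / ⟨ξ, ξ⟩` for a vector `ξ ≠ 0`. A supporting line `a t + b` of the convex
function `f` at `μ` has `b ≤ f 0 = 0`, so `f(x) ≥ a x + b` and, `Φ` being positive and contractive,
`Φ(f(x)) ≥ a Φ(x) + b Φ(1) ≥ a Φ(x) + b`; hence `⟨ξ, Φ(f(x)) ξ⟩ ≥ f(μ) ⟨ξ, ξ⟩`. If `ξ` lies in the
range of `e_J(Φ(x))` for an interval `J`, then `μ`, a convex combination of eigenvalues in `J`, lies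
in `J`. With `J = I` and `f ≥ 0` on `I` this makes `p Φ(f(x)) p` positive. The set
`J = I ∩ f⁻¹(s, ∞)` is an interval because `f` is monotone or antitone on `I`, and `e_J(Φ(x))` is
`e_(s,∞)(p f(Φ(x)) p)`; on its range the quadratic form of `p Φ(f(x)) p` exceeds `s ⟨ξ, ξ⟩`, so that
range meets the range of `e_(-∞,s](p Φ(f(x)) p)` trivially, and counting dimensions gives the rank
inequality.
-/

open scoped MatrixOrder

namespace Matrix

variable {k : ℕ} {A : Matrix (Fin k) (Fin k) ℂ} (hA : A.IsHermitian)

lemma matFun_eq_cfc (g : ℝ → ℝ) : matFun hA g = cfc g A := (hA.cfc_eq g).symm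

lemma matFun_congr {B : Matrix (Fin k) (Fin k) ℂ} (hB : B.IsHermitian) (h : A = B)
    (g : ℝ → ℝ) : matFun hA g = matFun hB g := by
  subst h; rfl

lemma matFun_add (g h : ℝ → ℝ) :
    matFun hA g + matFun hA h = matFun hA (g + h) := by
  simp only [matFun_eq_cfc]
  exact (cfc_add (a := A) g h (A.finite_real_spectrum.continuousOn g)
    (A.finite_real_spectrum.continuousOn h)).symm

lemma matFun_mul (g h : ℝ → ℝ) :
    matFun hA g * matFun hA h = matFun hA (g * h) := by
  simp only [matFun_eq_cfc]
  exact (cfc_mul g h A (A.finite_real_spectrum.continuousOn g)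
    (A.finite_real_spectrum.continuousOn h)).symm

lemma matFun_comp (g h : ℝ → ℝ) :
    matFun (matFun_isHermitian hA g) h = matFun hA (h ∘ g) := by
  simp only [matFun_eq_cfc]
  exact (cfc_comp h g A hA.isSelfAdjoint ((A.finite_real_spectrum.image g).continuousOn h)
    (A.finite_real_spectrum.continuousOn g)).symm

lemma matFun_id : matFun hA id = A := by
  rw [matFun_eq_cfc]; exact cfc_id ℝ A

lemma matFun_const_one : matFun hA 1 = 1 := by
  rw [matFun_eq_cfc]; exact cfc_const_one ℝ A

lemma matFun_affine (a b : ℝ) :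
    matFun hA (fun t => a * t + b) = a • A + b • (1 : Matrix (Fin k) (Fin k) ℂ) := by
  rw [matFun_eq_cfc]
  refine (cfc_add_const b (fun t => a * t) A (A.finite_real_spectrum.continuousOn _)
    hA.isSelfAdjoint).trans ?_
  rw [cfc_const_mul a (fun t => t) A (A.finite_real_spectrum.continuousOn _), cfc_id' ℝ A,
    Algebra.algebraMap_eq_smul_one]

lemma affine_le_matFun {a b : ℝ} {g : ℝ → ℝ} (h : ∀ t ∈ spectrum ℝ A, a * t + b ≤ g t) :
    a • A + b • (1 : Matrix (Fin k) (Fin k) ℂ) ≤ matFun hA g := by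
  rw [← matFun_affine hA, matFun_eq_cfc, matFun_eq_cfc]
  exact cfc_mono h (A.finite_real_spectrum.continuousOn _)
    (A.finite_real_spectrum.continuousOn _)

lemma specProj_mul_specProj (S T : Set ℝ) :
    specProj hA S * specProj hA T = specProj hA (S ∩ T) := by
  rw [specProj, specProj, specProj, matFun_mul, Set.inter_indicator_one]

lemma specProj_add_specProj_compl (S : Set ℝ) :
    specProj hA S + specProj hA Sᶜ = 1 := by
  rw [specProj, specProj, matFun_add, Set.indicator_self_add_compl, matFun_const_one]

lemma specProj_mul_matFun_mul_specProj (I : Set ℝ) (g : ℝ → ℝ) :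
    specProj hA I * matFun hA g * specProj hA I = matFun hA (I.indicator g) := by
  rw [specProj, matFun_mul, matFun_mul]
  congr 1
  ext t
  by_cases ht : t ∈ I <;> simp [ht]

lemma specProj_compression_eq {I T : Set ℝ} (hT : (0 : ℝ) ∉ T) (g : ℝ → ℝ)
    (h : (specProj hA I * matFun hA g * specProj hA I).IsHermitian) :
    specProj h T = specProj hA (I ∩ g ⁻¹' T) := by
  rw [specProj, matFun_congr h (matFun_isHermitian hA _)
    (specProj_mul_matFun_mul_specProj hA I g), matFun_comp, specProj]
  congr 1
  ext t
  by_cases ht : t ∈ I <;> by_cases hgt : g t ∈ T <;> simp [ht, hgt, hT]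

lemma specProj_mulVec_of_subset {S T : Set ℝ} (h : T ⊆ S) (ζ : Fin k → ℂ) :
    specProj hA S *ᵥ (specProj hA T *ᵥ ζ) = specProj hA T *ᵥ ζ := by
  rw [mulVec_mulVec, specProj_mul_specProj, Set.inter_eq_right.mpr h]

lemma IsHermitian.dotProduct_mul_mul_mulVec {p : Matrix (Fin k) (Fin k) ℂ} (hp : p.IsHermitian)
    (M : Matrix (Fin k) (Fin k) ℂ) (ξ : Fin k → ℂ) :
    star ξ ⬝ᵥ ((p * M * p) *ᵥ ξ) = star (p *ᵥ ξ) ⬝ᵥ (M *ᵥ (p *ᵥ ξ)) := by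
  rw [← mulVec_mulVec, ← mulVec_mulVec, dotProduct_mulVec (star ξ), star_mulVec, hp.eq]

noncomputable def eigenCoord (ξ : Fin k → ℂ) : Fin k → ℂ :=
  star (hA.eigenvectorUnitary : Matrix (Fin k) (Fin k) ℂ) *ᵥ ξ

lemma eigenCoord_matFun_mulVec (g : ℝ → ℝ) (ξ : Fin k → ℂ) (i : Fin k) :
    eigenCoord hA (matFun hA g *ᵥ ξ) i = (g (hA.eigenvalues i) : ℂ) * eigenCoord hA ξ i := by
  unfold eigenCoord matFun IsHermitian.cfc
  rw [Unitary.conjStarAlgAut_apply, mulVec_mulVec, ← mul_assoc, ← mul_assoc,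
    Unitary.coe_star_mul_self, one_mul, ← mulVec_mulVec]
  simp [mulVec_diagonal]

lemma dotProduct_eigenCoord (ξ ζ : Fin k → ℂ) :
    star (eigenCoord hA ξ) ⬝ᵥ eigenCoord hA ζ = star ξ ⬝ᵥ ζ := by
  rw [eigenCoord, eigenCoord, star_mulVec, ← dotProduct_mulVec, mulVec_mulVec,
    star_eq_conjTranspose, conjTranspose_conjTranspose, ← star_eq_conjTranspose,
    Unitary.mul_star_self_of_mem (SetLike.coe_mem _), one_mulVec]

lemma dotProduct_matFun_mulVec (g : ℝ → ℝ) (ξ : Fin k → ℂ) :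
    star ξ ⬝ᵥ (matFun hA g *ᵥ ξ)
      = ((∑ i, g (hA.eigenvalues i) * Complex.normSq (eigenCoord hA ξ i) : ℝ) : ℂ) := by
  rw [← dotProduct_eigenCoord hA, dotProduct]
  push_cast
  refine Finset.sum_congr rfl fun i _ => ?_
  rw [eigenCoord_matFun_mulVec, Complex.normSq_eq_conj_mul_self]
  simp only [Pi.star_apply, Complex.star_def]
  ring

lemma eigenCoord_eq_zero_of_specProj_mulVec_eq {J : Set ℝ} {ξ : Fin k → ℂ}
    (hξ : specProj hA J *ᵥ ξ = ξ) {i : Fin k} (hi : hA.eigenvalues i ∉ J) :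
    eigenCoord hA ξ i = 0 := by
  rw [← hξ, specProj, eigenCoord_matFun_mulVec, Set.indicator_of_notMem hi]
  simp

lemma exists_mem_dotProduct_mulVec_eq {J : Set ℝ} (hJ : J.OrdConnected) {ξ : Fin k → ℂ}
    (hξ : specProj hA J *ᵥ ξ = ξ) (hξ0 : ξ ≠ 0) :
    ∃ μ ∈ J, star ξ ⬝ᵥ (A *ᵥ ξ) = μ * (star ξ ⬝ᵥ ξ) := by
  classical
  set c : Fin k → ℝ := fun i => Complex.normSq (eigenCoord hA ξ i) with hc
  have hform : star ξ ⬝ᵥ (A *ᵥ ξ) = ((∑ i, c i * hA.eigenvalues i : ℝ) : ℂ) := by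
    have h := dotProduct_matFun_mulVec hA id ξ
    rw [matFun_id] at h
    rw [h]
    exact congrArg _ (Finset.sum_congr rfl fun i _ => mul_comm _ _)
  have hnorm : star ξ ⬝ᵥ ξ = ((∑ i, c i : ℝ) : ℂ) := by
    simpa only [matFun_const_one, one_mulVec, Pi.one_apply, one_mul]
      using dotProduct_matFun_mulVec hA 1 ξ
  have hpos : 0 < ∑ i, c i := by
    rw [← Complex.zero_lt_real, ← hnorm]
    exact dotProduct_star_self_pos_iff.mpr hξ0
  set t := Finset.univ.filter fun i => c i ≠ 0
  have hsupp : ∀ i ∈ t, hA.eigenvalues i ∈ J := fun i hi => by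
    by_contra hiJ
    exact (Finset.mem_filter.mp hi).2 (by
      simp [hc, eigenCoord_eq_zero_of_specProj_mulVec_eq hA hξ hiJ])
  have hsum : ∑ i ∈ t, c i = ∑ i, c i := Finset.sum_filter_ne_zero _
  refine ⟨t.centerMass c hA.eigenvalues, hJ.convex.centerMass_mem
    (fun i _ => Complex.normSq_nonneg _) (hsum ▸ hpos) hsupp, ?_⟩
  rw [Finset.centerMass, hsum, Finset.sum_filter_of_ne fun i _ h => left_ne_zero_of_mul h,
    hform, hnorm, ← Complex.ofReal_mul]
  congr 1
  simp only [smul_eq_mul]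
  field_simp [hpos.ne']

lemma finrank_le_rank_specProj_Ioi {M : Matrix (Fin k) (Fin k) ℂ} (hM : M.IsHermitian) (s : ℝ)
    (V : Submodule ℂ (Fin k → ℂ))
    (hV : ∀ ξ ∈ V, ξ ≠ 0 → (s : ℂ) * (star ξ ⬝ᵥ ξ) < star ξ ⬝ᵥ (M *ᵥ ξ)) :
    Module.finrank ℂ V ≤ (specProj hM (Set.Ioi s)).rank := by
  have hdisj : Disjoint V (LinearMap.ker (specProj hM (Set.Ioi s)).mulVecLin) := by
    rw [Submodule.disjoint_def]
    intro ξ hξV hξker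
    by_contra hξ0
    have hξ : specProj hM (Set.Iic s) *ᵥ ξ = ξ := by
      rw [← Set.compl_Ioi, ← sub_eq_of_eq_add' (specProj_add_specProj_compl hM _).symm,
        sub_mulVec, one_mulVec, show specProj hM (Set.Ioi s) *ᵥ ξ = 0 from hξker, sub_zero]
    obtain ⟨μ, hμs, hμ⟩ := exists_mem_dotProduct_mulVec_eq hM Set.ordConnected_Iic hξ hξ0
    refine (hV ξ hξV hξ0).not_ge ?_
    rw [hμ]
    exact mul_le_mul_of_nonneg_right (Complex.real_le_real.mpr hμs)
      (dotProduct_star_self_nonneg ξ)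
  have h1 := Submodule.finrank_add_finrank_le_of_disjoint hdisj
  have h2 := LinearMap.finrank_range_add_finrank_ker (specProj hM (Set.Ioi s)).mulVecLin
  rw [Module.finrank_fintype_fun_eq_card, Fintype.card_fin] at h1 h2
  rw [Matrix.rank]
  omega

end Matrix

lemma Set.OrdConnected.inter_preimage {α β : Type*} [Preorder α] [Preorder β] {f : α → β}
    {I : Set α} {T : Set β} (hI : I.OrdConnected) (hT : T.OrdConnected)
    (hf : MonotoneOn f I ∨ AntitoneOn f I) : (I ∩ f ⁻¹' T).OrdConnected := by
  refine ⟨fun a ha b hb c hc => ?_⟩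
  have hcI : c ∈ I := hI.out ha.1 hb.1 hc
  refine ⟨hcI, ?_⟩
  rcases hf with hf | hf
  · exact hT.out ha.2 hb.2 ⟨hf ha.1 hcI hc.1, hf hcI hb.1 hc.2⟩
  · exact hT.out hb.2 ha.2 ⟨hf hcI hb.1 hc.2, hf ha.1 hcI hc.1⟩

lemma ConvexOn.exists_forall_add_mul_sub_le {f : ℝ → ℝ} (hf : ConvexOn ℝ Set.univ f) (μ : ℝ) :
    ∃ a, ∀ t, f μ + a * (t - μ) ≤ f t := by
  have hμ : μ ∈ interior Set.univ := by simp
  refine ⟨derivWithin f (Set.Ioi μ) μ, fun t => ?_⟩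
  rcases lt_trichotomy t μ with ht | rfl | ht
  · have hslope := (hf.slope_le_leftDeriv_of_mem_interior (Set.mem_univ t) hμ ht).trans
      (hf.leftDeriv_le_rightDeriv_of_mem_interior hμ)
    rw [slope_def_field, div_le_iff₀ (sub_pos.mpr ht)] at hslope
    linarith
  · simp
  · have hslope := hf.rightDeriv_le_slope_of_mem_interior hμ (Set.mem_univ t) ht
    rw [slope_def_field, le_div_iff₀ (sub_pos.mpr ht)] at hslope
    linarith

section PositiveMap

variable {k m : ℕ} (Φ : Matrix (Fin k) (Fin k) ℂ →ₚ[ℂ] Matrix (Fin m) (Fin m) ℂ)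
  (hΦ1 : Φ 1 ≤ 1) {x : Matrix (Fin k) (Fin k) ℂ} (hx : x.IsHermitian)

include hΦ1 in
lemma affine_le_map_matFun {a b : ℝ} {g : ℝ → ℝ} (hb : b ≤ 0)
    (h : ∀ t ∈ spectrum ℝ x, a * t + b ≤ g t) :
    a • Φ x + b • (1 : Matrix (Fin m) (Fin m) ℂ) ≤ Φ (matFun hx g) :=
  calc a • Φ x + b • (1 : Matrix (Fin m) (Fin m) ℂ) ≤ a • Φ x + b • Φ 1 :=
        add_le_add le_rfl (smul_le_smul_of_nonpos_left hΦ1 hb)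
    _ = Φ (a • x + b • (1 : Matrix (Fin k) (Fin k) ℂ)) := by
        rw [map_add, PositiveLinearMap.map_smul_of_tower, PositiveLinearMap.map_smul_of_tower]
    _ ≤ Φ (matFun hx g) := OrderHomClass.mono Φ (affine_le_matFun hx h)

include hΦ1 in
lemma ConvexOn.mul_dotProduct_le_dotProduct_map_matFun {f : ℝ → ℝ}
    (hf : ConvexOn ℝ Set.univ f) (hf0 : f 0 ≤ 0) {ξ : Fin m → ℂ} {μ : ℝ}
    (hμ : star ξ ⬝ᵥ (Φ x *ᵥ ξ) = μ * (star ξ ⬝ᵥ ξ)) :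
    (f μ : ℂ) * (star ξ ⬝ᵥ ξ) ≤ star ξ ⬝ᵥ (Φ (matFun hx f) *ᵥ ξ) := by
  obtain ⟨a, ha⟩ := hf.exists_forall_add_mul_sub_le μ
  have hb : f μ - a * μ ≤ 0 := by linarith [ha 0]
  have hle := affine_le_map_matFun Φ hΦ1 hx (a := a) (g := f) hb fun t _ => by linarith [ha t]
  have hq := (Matrix.le_iff.mp hle).dotProduct_mulVec_nonneg ξ
  rw [sub_mulVec, add_mulVec, smul_mulVec, smul_mulVec, one_mulVec, dotProduct_sub,
    dotProduct_add, dotProduct_smul, dotProduct_smul, hμ, sub_nonneg] at hq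
  convert hq using 1
  simp only [Complex.real_smul, Complex.ofReal_sub, Complex.ofReal_mul]
  ring

end PositiveMap

theorem specProj_rank_le_of_contractive_positive_map_general {n : ℕ}
    (Φ : Matrix (Fin n) (Fin n) ℂ →ₗ[ℂ] Matrix (Fin n) (Fin n) ℂ)
    (hΦpos : ∀ y : Matrix (Fin n) (Fin n) ℂ, y.PosSemidef → (Φ y).PosSemidef)
    (hΦ1 : (1 - Φ 1).PosSemidef)
    {x : Matrix (Fin n) (Fin n) ℂ} (hx : x.IsHermitian)
    (f : ℝ → ℝ) (hconv : ConvexOn ℝ Set.univ f) (hf0 : f 0 = 0)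
    (I : Set ℝ) (hI : I.OrdConnected)
    (hmono : MonotoneOn f I ∨ AntitoneOn f I) (hfI : ∀ t ∈ I, 0 ≤ f t) :
    ∀ hΦx : (Φ x).IsHermitian,
      (specProj hΦx I * Φ (matFun hx f) * specProj hΦx I).PosSemidef ∧
      ∀ s : ℝ, 0 < s →
        ∀ (h1 : (specProj hΦx I * matFun hΦx f * specProj hΦx I).IsHermitian)
          (h2 : (specProj hΦx I * Φ (matFun hx f) * specProj hΦx I).IsHermitian),
          (specProj h1 (Set.Ioi s)).rank ≤ (specProj h2 (Set.Ioi s)).rank := by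
  intro hΦx
  let Ψ := PositiveLinearMap.mk₀ Φ fun y hy => (hΦpos y hy.posSemidef).nonneg
  have hp : (specProj hΦx I).IsHermitian := matFun_isHermitian hΦx _
  have jensen : ∀ J : Set ℝ, J.OrdConnected → ∀ ξ, specProj hΦx J *ᵥ ξ = ξ → ξ ≠ 0 →
      ∃ μ ∈ J, (f μ : ℂ) * (star ξ ⬝ᵥ ξ) ≤ star ξ ⬝ᵥ (Φ (matFun hx f) *ᵥ ξ) := by
    intro J hJ ξ hξ hξ0
    obtain ⟨μ, hμJ, hμ⟩ := exists_mem_dotProduct_mulVec_eq hΦx hJ hξ hξ0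
    exact ⟨μ, hμJ, hconv.mul_dotProduct_le_dotProduct_map_matFun Ψ hΦ1 hx hf0.le hμ⟩
  refine ⟨.of_dotProduct_mulVec_nonneg ?_ fun ξ => ?_, fun s hs h1 h2 => ?_⟩
  · have hM : (Φ (matFun hx f)).IsHermitian := (matFun_isHermitian hx f).isSelfAdjoint.map' Ψ
    simpa only [hp.eq] using isHermitian_conjTranspose_mul_mul (specProj hΦx I) hM
  · rw [hp.dotProduct_mul_mul_mulVec]
    obtain hζ0 | hζ0 := eq_or_ne (specProj hΦx I *ᵥ ξ) 0
    · simp [hζ0]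
    obtain ⟨μ, hμI, hμ⟩ := jensen I hI _ (specProj_mulVec_of_subset hΦx subset_rfl ξ) hζ0
    exact (mul_nonneg (Complex.zero_le_real.mpr (hfI μ hμI))
      (dotProduct_star_self_nonneg _)).trans hμ
  · rw [specProj_compression_eq hΦx (T := Set.Ioi s) (not_lt.mpr hs.le) f h1]
    refine finrank_le_rank_specProj_Ioi h2 s _ ?_
    rintro _ ⟨ζ, rfl⟩ hξ0
    obtain ⟨μ, ⟨hμI, hμs⟩, hμ⟩ := jensen _ (hI.inter_preimage Set.ordConnected_Ioi hmono) _
      (specProj_mulVec_of_subset hΦx subset_rfl ζ) hξ0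
    rw [mulVecLin_apply, hp.dotProduct_mul_mul_mulVec,
      specProj_mulVec_of_subset hΦx Set.inter_subset_left]
    exact (mul_lt_mul_of_pos_right (Complex.real_lt_real.mpr hμs)
      (dotProduct_star_self_pos_iff.mpr hξ0)).trans_le hμ

/-- **Spectral comparison on an interval where `f` is monotone and nonnegative,
contractive case.** Let `Φ` be a positive linear map on `n×n` matrices with `Φ(1) ≤ 1`
(i.e. `1 - Φ(1)` positive semidefinite), `x` Hermitian, `f` continuous convex with
`f(0) = 0`, and `I` an interval on which `f` is monotone and nonnegative; set
`p = e_I(Φ(x))`. Then `p·Φ(f(x))·p` is positive semidefinite and, for every `s > 0`,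
`rank e_(s,∞)(p·f(Φ(x))·p) ≤ rank e_(s,∞)(p·Φ(f(x))·p)`. -/
theorem specProj_rank_le_of_contractive_positive_map {n : ℕ}
    (Φ : Matrix (Fin n) (Fin n) ℂ →ₗ[ℂ] Matrix (Fin n) (Fin n) ℂ)
    (hΦpos : ∀ y : Matrix (Fin n) (Fin n) ℂ, y.PosSemidef → (Φ y).PosSemidef)
    (hΦ1 : (1 - Φ 1).PosSemidef)
    {x : Matrix (Fin n) (Fin n) ℂ} (hx : x.IsHermitian)
    (f : ℝ → ℝ) (hf : Continuous f) (hconv : ConvexOn ℝ Set.univ f) (hf0 : f 0 = 0)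
    (I : Set ℝ) (hI : I.OrdConnected)
    (hmono : MonotoneOn f I ∨ AntitoneOn f I) (hfI : ∀ t ∈ I, 0 ≤ f t) :
    ∀ hΦx : (Φ x).IsHermitian,
      (specProj hΦx I * Φ (matFun hx f) * specProj hΦx I).PosSemidef ∧
      ∀ s : ℝ, 0 < s →
        ∀ (h1 : (specProj hΦx I * matFun hΦx f * specProj hΦx I).IsHermitian)
          (h2 : (specProj hΦx I * Φ (matFun hx f) * specProj hΦx I).IsHermitian),
          (specProj h1 (Set.Ioi s)).rank ≤ (specProj h2 (Set.Ioi s)).rank :=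
  specProj_rank_le_of_contractive_positive_map_general Φ hΦpos hΦ1 hx f hconv hf0 I hI hmono hfI
end
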